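/- arXiv:2308.03507 — 3 statements merged into one kernel-verified Lean document; each statement's English description precedes it below -/
import Mathlib

section
/- More generally, for any finite set C with |C| = m and only singleton approvals (δ({o}) = α_o for each o ∈ C and δ(S) = 0 for |S| ≠ 1), the Shapley value of alternative o equals (1/m)·α_o − (1/(m(m−1)))·Σ_{o' ≠ o} α_{o'}; consequently Φ_o(δ) > Φ_{o'}(δ) if and only if α_o > α_{o'}. -/
open Finset

/-- The Shapley value of player `i` in the TU game `δ` on the finite player set `ι`. -/
noncomputable def shapley {ι : Type*} [Fintype ι] [DecidableEq ι]
    (δ : Finset ι → ℝ) (i : ι) : ℝ :=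
  ∑ S ∈ (Finset.univ.erase i).powerset,
    ((S.card.factorial * (Fintype.card ι - S.card - 1).factorial : ℝ) /
      (Fintype.card ι).factorial) * (δ (insert i S) - δ S)

/-! When `δ` vanishes off singletons, only two kinds of marginal contribution of `o` are
nonzero: joining `∅` gains `α_o`, with weight `0! (m-1)! / m! = 1/m`, and joining a singleton
`{o'}` loses `α_{o'}`, with weight `1! (m-2)! / m! = 1/(m(m-1))`. Writing
`∑_{o' ≠ o} α_{o'} = ∑ α - α_o` then shows that
`Φ_o = (1/m + 1/(m(m-1))) α_o - (∑ α)/(m(m-1))` is a strictly increasing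
affine function of `α_o`, the same one for every `o`. -/

noncomputable def shapleyWeight (n k : ℕ) : ℝ :=
  (k.factorial * (n - k - 1).factorial : ℝ) / n.factorial

theorem shapleyWeight_zero {n : ℕ} (hn : n ≠ 0) : shapleyWeight n 0 = 1 / n := by
  obtain ⟨k, rfl⟩ := Nat.exists_eq_succ_of_ne_zero hn
  simp [shapleyWeight, Nat.factorial_succ]
  field_simp

theorem shapleyWeight_one {n : ℕ} (hn : 2 ≤ n) : shapleyWeight n 1 = 1 / (n * (n - 1)) := by
  obtain ⟨k, rfl⟩ := Nat.exists_eq_add_of_le' hn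
  rw [shapleyWeight, show k + 2 - 1 - 1 = k by omega]
  push_cast [Nat.factorial_succ]
  rw [show (k : ℝ) + 2 - 1 = k + 1 by ring]
  field_simp
  ring

section

variable {ι : Type*} [Fintype ι] [DecidableEq ι] {δ : Finset ι → ℝ}

theorem shapley_eq_sum_shapleyWeight (i : ι) :
    shapley δ i = ∑ S ∈ (univ.erase i).powerset,
      shapleyWeight (Fintype.card ι) S.card * (δ (insert i S) - δ S) :=
  rfl

theorem sum_shapleyWeight_mul_insert_of_card_ne_one 
    (hδ : ∀ S : Finset ι, S.card ≠ 1 → δ S = 0) (i : ι) :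
    ∑ S ∈ (univ.erase i).powerset, shapleyWeight (Fintype.card ι) S.card * δ (insert i S) =
      shapleyWeight (Fintype.card ι) 0 * δ {i} := by
  rw [sum_eq_single_of_mem ∅ (empty_mem_powerset _)]
  · rfl
  intro S hS hS_ne
  have hiS : i ∉ S := fun h => by simpa using mem_powerset.mp hS h
  have : (insert i S).card ≠ 1 := by
    rw [card_insert_of_notMem hiS]
    simpa using hS_ne
  rw [hδ _ this, mul_zero]

theorem sum_shapleyWeight_mul_of_card_ne_one 
    (hδ : ∀ S : Finset ι, S.card ≠ 1 → δ S = 0) (i : ι) :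
    ∑ S ∈ (univ.erase i).powerset, shapleyWeight (Fintype.card ι) S.card * δ S =
      shapleyWeight (Fintype.card ι) 1 * ∑ j ∈ univ.erase i, δ {j} := by
  rw [← sum_filter_of_ne (p := fun S => S.card = 1)
      (fun S _ h => by_contra fun hS => h (by rw [hδ S hS, mul_zero])),
    ← powersetCard_eq_filter, powersetCard_one, sum_map, mul_sum]
  simp

theorem shapley_of_card_ne_one 
    (hδ : ∀ S : Finset ι, S.card ≠ 1 → δ S = 0) (i : ι) :
    shapley δ i = δ {i} / Fintype.card ι -
      (∑ j ∈ univ.erase i, δ {j}) / (Fintype.card ι * (Fintype.card ι - 1)) := by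
  have hcard : Fintype.card ι ≠ 0 := (Fintype.card_pos_iff.mpr ⟨i⟩).ne'
  rw [shapley_eq_sum_shapleyWeight]
  simp only [mul_sub, sum_sub_distrib, sum_shapleyWeight_mul_insert_of_card_ne_one hδ,
    sum_shapleyWeight_mul_of_card_ne_one hδ, shapleyWeight_zero hcard]
  rcases (Nat.one_le_iff_ne_zero.mpr hcard).eq_or_lt with hone | htwo
  · -- for `m = 1` the sum is empty, so the junk value `1 / (1 * 0) = 0` is harmless
    have : univ.erase i = ∅ := by
      rw [← card_eq_zero, card_erase_of_mem (mem_univ i), card_univ, ← hone]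
    simp [this, div_eq_inv_mul]
  · rw [shapleyWeight_one htwo]
    ring

theorem shapley_eq_mul_sub_of_card_ne_one 
    (hδ : ∀ S : Finset ι, S.card ≠ 1 → δ S = 0) (i : ι) :
    shapley δ i = (1 / Fintype.card ι + 1 / (Fintype.card ι * (Fintype.card ι - 1))) * δ {i} -
      (∑ j, δ {j}) / (Fintype.card ι * (Fintype.card ι - 1)) := by
  rw [shapley_of_card_ne_one hδ, ← sum_erase_add _ _ (mem_univ i)]
  ring

theorem shapley_lt_shapley_iff_of_card_ne_one 
    (hδ : ∀ S : Finset ι, S.card ≠ 1 → δ S = 0) (i j : ι) :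
    shapley δ i < shapley δ j ↔ δ {i} < δ {j} := by
  have : Nonempty ι := ⟨i⟩
  have hpos : 0 < 1 / (Fintype.card ι : ℝ) + 1 / (Fintype.card ι * (Fintype.card ι - 1)) := by
    have hmul : (0 : ℝ) ≤ Fintype.card ι * (Fintype.card ι - 1) :=
      mul_nonneg (Nat.cast_nonneg _) (sub_nonneg.mpr (Nat.one_le_cast.mpr Fintype.card_pos))
    positivity
  rw [shapley_eq_mul_sub_of_card_ne_one hδ, shapley_eq_mul_sub_of_card_ne_one hδ,
    sub_lt_sub_iff_right, mul_lt_mul_iff_of_pos_left hpos]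

end

theorem shapley_singletons_general_general {C : Type*} [Fintype C] [DecidableEq C]
    (α : C → ℝ) (δ : Finset C → ℝ)
    (hsingle : ∀ o : C, δ {o} = α o)
    (hother : ∀ S : Finset C, S.card ≠ 1 → δ S = 0) :
    (∀ o : C, shapley δ o =
      α o / (Fintype.card C : ℝ) -
        (∑ o' ∈ Finset.univ.erase o, α o') /
          ((Fintype.card C : ℝ) * ((Fintype.card C : ℝ) - 1))) ∧
    (∀ o o' : C, shapley δ o > shapley δ o' ↔ α o > α o') := by
  refine ⟨fun o => ?_, fun o o' => ?_⟩
  · simp only [shapley_of_card_ne_one hother, hsingle]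
  · simpa only [hsingle] using shapley_lt_shapley_iff_of_card_ne_one hother o' o

/-- With only singleton approvals, the Shapley value of `o` equals
`α o / m − (∑_{o' ≠ o} α o') / (m (m − 1))` where `m = |C|`, and consequently the
Shapley ranking coincides with the approval ranking. -/
theorem shapley_singletons_general {C : Type*} [Fintype C] [DecidableEq C] [Nonempty C]
    (α : C → ℝ) (δ : Finset C → ℝ)
    (hsingle : ∀ o : C, δ {o} = α o)
    (hother : ∀ S : Finset C, S.card ≠ 1 → δ S = 0) :
    (∀ o : C, shapley δ o =
      α o / (Fintype.card C : ℝ) -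
        (∑ o' ∈ Finset.univ.erase o, α o') /
          ((Fintype.card C : ℝ) * ((Fintype.card C : ℝ) - 1))) ∧
    (∀ o o' : C, shapley δ o > shapley δ o' ↔ α o > α o') :=
  shapley_singletons_general_general α δ hsingle hother
end

section
/- Uniqueness (Shapley characterization): if a value Φ : G(N) → ℝ^N satisfies efficiency (Σ_i Φ_i(δ) = δ(N)), the null player property (Φ_i(δ) = 0 whenever δ(S ∪ {i}) = δ(S) for all S), symmetry (Φ_i(δ) = Φ_j(δ) whenever δ(S ∪ {i}) = δ(S ∪ {j}) for all S ⊆ N \ {i,j}), and additivity (Φ(δ + γ) = Φ(δ) + Φ(γ)), then Φ is the Shapley value. -/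
/-!
Every game is a combination `δ = ∑_T d_T • u_T` of unanimity games `u_T S = [T ⊆ S]`, whose
coefficients `d_T` (Harsanyi dividends) are obtained by Möbius inversion on the subset lattice.
On a single game `c • u_T` the axioms leave no freedom: players outside `T` are null, players in
`T` are symmetric, and efficiency splits `c` equally among them, so each gets `c / |T|`. The
Shapley formula gives the same value, by the factorial identity
`∑_k C(m,k) (k+s)! (m-k)! = (m+s+1)! / (s+1)`. Additivity then carries the agreement from the
summands `d_T • u_T` to `δ`.
-/

open Finset

open scoped Nat

theorem Nat.choose_mul_factorial_add_mul_factorial_sub {m k : ℕ} (s : ℕ) (hk : k ≤ m) :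
    m.choose k * ((k + s)! * (m - k)!) = (k + s).choose s * (s ! * m !) := by
  apply Nat.eq_of_mul_eq_mul_right k.factorial_pos
  calc m.choose k * ((k + s)! * (m - k)!) * k !
      = (m.choose k * k ! * (m - k)!) * (k + s)! := by ring
    _ = ((k + s).choose s * k ! * s !) * m ! := by
        rw [Nat.choose_mul_factorial_mul_factorial hk, Nat.add_choose_mul_factorial_mul_factorial]
        ring
    _ = (k + s).choose s * (s ! * m !) * k ! := by ring

theorem Nat.succ_mul_sum_choose_mul_factorial (m s : ℕ) :
    (s + 1) * ∑ k ∈ range (m + 1), m.choose k * ((k + s)! * (m - k)!) = (m + s + 1)! := by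
  rw [sum_congr rfl fun k hk =>
      choose_mul_factorial_add_mul_factorial_sub s (mem_range_succ_iff.1 hk),
    ← sum_mul, sum_range_add_choose, add_assoc,
    ← add_choose_mul_factorial_mul_factorial m (s + 1), factorial_succ]
  ring

theorem sum_choose_smul_factorial_div_factorial (m s : ℕ) :
    ∑ k ∈ range (m + 1), m.choose k • ((k + s)! * (m - k)! / (m + s + 1)! : ℝ) = 1 / (s + 1) := by
  have h := congrArg (Nat.cast : ℕ → ℝ) (Nat.succ_mul_sum_choose_mul_factorial m s)
  push_cast at h
  calc _ = (∑ k ∈ range (m + 1), m.choose k * ((k + s)! * (m - k)! : ℝ)) / (m + s + 1)! := by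
        simp only [sum_div, nsmul_eq_mul, mul_div_assoc]
    _ = 1 / (s + 1) := by
        rw [div_eq_div_iff (by positivity) (by positivity), ← h]
        ring

section Dividends

variable {ι : Type*}

def harsanyiDividend (δ : Finset ι → ℝ) (T : Finset ι) : ℝ :=
  ∑ R ∈ T.powerset, (-1) ^ (#T - #R) * δ R

theorem harsanyiDividend_empty (δ : Finset ι → ℝ) : harsanyiDividend δ ∅ = δ ∅ := by
  simp [harsanyiDividend]

variable [DecidableEq ι]

theorem Finset.sum_Icc_eq_sum_powerset_sdiff {M : Type*} [AddCommMonoid M] {R S : Finset ι}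
    (h : R ⊆ S) (f : Finset ι → M) :
    ∑ T ∈ Icc R S, f T = ∑ V ∈ (S \ R).powerset, f (R ∪ V) := by
  have hcancel : ∀ V ∈ (S \ R).powerset, (R ∪ V) \ R = V := fun V hV =>
    union_sdiff_cancel_left (disjoint_of_subset_right (mem_powerset.1 hV) disjoint_sdiff)
  rw [Icc_eq_image_powerset h, sum_image]
  intro V hV W hW hVW
  rw [← hcancel V hV, ← hcancel W hW]
  exact congrArg (· \ R) hVW

theorem Finset.sum_Icc_neg_one_pow_card_sub {A : Type*} [Ring A] {R S : Finset ι} (h : R ⊆ S) :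
    ∑ T ∈ Icc R S, (-1 : A) ^ (#T - #R) = if R = S then 1 else 0 := by
  have hcard : ∀ V ∈ (S \ R).powerset, #(R ∪ V) - #R = #V := fun V hV => by
    rw [card_union_of_disjoint (disjoint_of_subset_right (mem_powerset.1 hV) disjoint_sdiff),
      Nat.add_sub_cancel_left]
  have halt := congrArg (Int.cast : ℤ → A) (sum_powerset_neg_one_pow_card (x := S \ R))
  push_cast at halt
  rw [sum_Icc_eq_sum_powerset_sdiff h, sum_congr rfl fun V hV => by rw [hcard V hV], halt]
  exact if_congr (by rw [sdiff_eq_empty_iff_subset, subset_antisymm_iff, and_iff_right h])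
    rfl rfl

theorem sum_powerset_harsanyiDividend (δ : Finset ι → ℝ) (S : Finset ι) :
    ∑ T ∈ S.powerset, harsanyiDividend δ T = δ S := by
  unfold harsanyiDividend
  rw [sum_comm' (t' := S.powerset) (s' := fun R => Icc R S) fun T R => by
    simp only [mem_powerset, mem_Icc]
    exact ⟨fun ⟨hTS, hRT⟩ => ⟨⟨hRT, hTS⟩, hRT.trans hTS⟩, fun ⟨h, _⟩ => h.symm⟩]
  simp_rw [← sum_mul]
  rw [sum_congr rfl fun R hR => by rw [sum_Icc_neg_one_pow_card_sub (mem_powerset.1 hR)]]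
  simp only [ite_mul, one_mul, zero_mul, sum_ite_eq', mem_powerset_self, if_true]

def unanimityGame (T : Finset ι) : Finset ι → ℝ := fun S => if T ⊆ S then 1 else 0

theorem sum_harsanyiDividend_smul_unanimityGame [Fintype ι] (δ : Finset ι → ℝ) :
    ∑ T, harsanyiDividend δ T • unanimityGame T = δ := by
  funext S
  simp only [Finset.sum_apply, Pi.smul_apply, smul_eq_mul, unanimityGame, mul_ite, mul_one,
    mul_zero]
  rw [← sum_filter, ← sum_powerset_harsanyiDividend δ S]
  congr 1
  ext T
  simp

theorem harsanyiDividend_smul_unanimityGame_empty {δ : Finset ι → ℝ} (hδ : δ ∅ = 0)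
    (T : Finset ι) : (harsanyiDividend δ T • unanimityGame T) ∅ = 0 := by
  rcases T.eq_empty_or_nonempty with rfl | hT
  · simp [harsanyiDividend_empty, hδ]
  · simp [unanimityGame, hT.ne_empty]

section Shapley

variable [Fintype ι]

theorem shapley_sum {α : Type*} (A : Finset α) (g : α → Finset ι → ℝ) (i : ι) :
    shapley (∑ a ∈ A, g a) i = ∑ a ∈ A, shapley (g a) i := by
  simp only [shapley, Finset.sum_apply, ← sum_sub_distrib, mul_sum]
  exact sum_comm

theorem shapley_smul (c : ℝ) (δ : Finset ι → ℝ) (i : ι) :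
    shapley (c • δ) i = c * shapley δ i := by
  simp only [shapley, Pi.smul_apply, smul_eq_mul, mul_sum, ← mul_sub]
  exact sum_congr rfl fun _ _ => by ring

theorem shapley_unanimityGame_of_notMem {T : Finset ι} {i : ι} (hi : i ∉ T) :
    shapley (unanimityGame T) i = 0 :=
  sum_eq_zero fun S _ => by simp [unanimityGame, subset_insert_iff_of_notMem hi]

theorem shapley_unanimityGame_of_mem {T : Finset ι} {i : ι} (hi : i ∈ T) :
    shapley (unanimityGame T) i = (#T : ℝ)⁻¹ := by
  set n := Fintype.card ι
  set B := T.erase i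
  set U := (univ : Finset ι).erase i
  have hBU : B ⊆ U := erase_subset_erase i (subset_univ T)
  obtain ⟨s, hs⟩ : ∃ s, #T = s + 1 := Nat.exists_eq_add_one.2 (card_pos.2 ⟨i, hi⟩)
  set M := #(U \ B)
  have hn : n = M + s + 1 := by
    have : #T ≤ n := card_le_univ T
    simp only [M, U, B, card_sdiff_of_subset hBU, card_erase_of_mem hi,
      card_erase_of_mem (mem_univ i), card_univ]
    omega
  have hmarginal : ∀ S ∈ U.powerset,
      unanimityGame T (insert i S) - unanimityGame T S = if B ⊆ S then 1 else 0 := by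
    intro S hS
    have hiS : i ∉ S := fun h => (mem_erase.1 (mem_powerset.1 hS h)).1 rfl
    have hTS : ¬T ⊆ S := fun h => hiS (h hi)
    simp [unanimityGame, subset_insert_iff, hTS, B]
  have hweight : ∀ V ∈ (U \ B).powerset,
      ((#(B ∪ V))! * (n - #(B ∪ V) - 1)! / n ! : ℝ) = (#V + s)! * (M - #V)! / (M + s + 1)! := by
    intro V hV
    have hV' := mem_powerset.1 hV
    have hcard : #(B ∪ V) = #V + s := by
      rw [card_union_of_disjoint (disjoint_of_subset_right hV' disjoint_sdiff),
        card_erase_of_mem hi]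
      omega
    have : #V ≤ M := card_le_card hV'
    rw [hcard, hn, show M + s + 1 - (#V + s) - 1 = M - #V by omega]
  calc shapley (unanimityGame T) i
      = ∑ S ∈ Icc B U, ((#S)! * (n - #S - 1)! / n ! : ℝ) := by
        rw [shapley, Icc_eq_filter_powerset, sum_filter]
        exact sum_congr rfl fun S hS => by rw [hmarginal S hS, mul_boole]
    _ = ∑ k ∈ range (M + 1), M.choose k • ((k + s)! * (M - k)! / (M + s + 1)! : ℝ) := by
        rw [sum_Icc_eq_sum_powerset_sdiff hBU, sum_congr rfl hweight,
          sum_powerset_apply_card fun k => ((k + s)! * (M - k)! / (M + s + 1)! : ℝ)]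
    _ = (#T : ℝ)⁻¹ := by
        rw [sum_choose_smul_factorial_div_factorial, hs]
        push_cast
        ring

theorem shapley_unanimityGame (T : Finset ι) (i : ι) :
    shapley (unanimityGame T) i = if i ∈ T then (#T : ℝ)⁻¹ else 0 := by
  split_ifs with hi
  · exact shapley_unanimityGame_of_mem hi
  · exact shapley_unanimityGame_of_notMem hi

end Shapley

end Dividends

namespace GameValue

variable {ι : Type*} (Φ : (Finset ι → ℝ) → ι → ℝ)

def Additive : Prop :=
  ∀ δ γ : Finset ι → ℝ, δ ∅ = 0 → γ ∅ = 0 → ∀ i, Φ (δ + γ) i = Φ δ i + Φ γ i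

def Efficient [Fintype ι] : Prop :=
  ∀ δ : Finset ι → ℝ, δ ∅ = 0 → ∑ i, Φ δ i = δ univ

variable {Φ}

theorem Additive.map_zero (hadd : Additive Φ) (i : ι) : Φ 0 i = 0 := by
  have h := hadd 0 0 rfl rfl i
  rw [add_zero] at h
  linarith

theorem Additive.map_sum (hadd : Additive Φ) {α : Type*} (A : Finset α)
    (g : α → Finset ι → ℝ) (hg : ∀ a ∈ A, g a ∅ = 0) (i : ι) :
    Φ (∑ a ∈ A, g a) i = ∑ a ∈ A, Φ (g a) i := by
  classical
  induction A using Finset.induction_on with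
  | empty => simp [hadd.map_zero]
  | insert a A ha ih =>
    have hA : (∑ b ∈ A, g b) ∅ = 0 := by
      rw [Finset.sum_apply]
      exact sum_eq_zero fun b hb => hg b (mem_insert_of_mem hb)
    rw [sum_insert ha, sum_insert ha, hadd _ _ (hg a (mem_insert_self a A)) hA,
      ih fun b hb => hg b (mem_insert_of_mem hb)]

variable (Φ) [DecidableEq ι]

def NullPlayer : Prop :=
  ∀ δ : Finset ι → ℝ, δ ∅ = 0 → ∀ i, (∀ S, i ∉ S → δ (insert i S) = δ S) → Φ δ i = 0

def Symmetric : Prop :=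
  ∀ δ : Finset ι → ℝ, δ ∅ = 0 → ∀ i j,
    (∀ S, i ∉ S → j ∉ S → δ (insert i S) = δ (insert j S)) → Φ δ i = Φ δ j

variable {Φ}

theorem apply_smul_unanimityGame [Fintype ι] (heff : Efficient Φ) (hnull : NullPlayer Φ)
    (hsym : Symmetric Φ) {T : Finset ι} {c : ℝ} (h0 : (c • unanimityGame T) ∅ = 0) (i : ι) :
    Φ (c • unanimityGame T) i = c * if i ∈ T then (#T : ℝ)⁻¹ else 0 := by
  set v := c • unanimityGame T
  have hout : ∀ j ∉ T, Φ v j = 0 := fun j hj => hnull v h0 j fun S _ => by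
    simp [v, unanimityGame, subset_insert_iff_of_notMem hj]
  split_ifs with hi
  swap
  · rw [mul_zero, hout i hi]
  have hin : ∀ j ∈ T, Φ v j = Φ v i := by
    intro j hj
    by_cases hji : j = i
    · rw [hji]
    refine hsym v h0 j i fun S hjS hiS => ?_
    have hj' : ¬T ⊆ insert i S := fun h => hjS ((mem_insert.1 (h hj)).resolve_left hji)
    have hi' : ¬T ⊆ insert j S := fun h => hiS ((mem_insert.1 (h hi)).resolve_left (Ne.symm hji))
    simp [v, unanimityGame, hj', hi']
  have hsum : ∑ j, Φ v j = #T * Φ v i := by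
    rw [← sum_subset (subset_univ T) fun j _ hj => hout j hj, sum_congr rfl hin, sum_const,
      nsmul_eq_mul]
  have hcard : (#T : ℝ) ≠ 0 := Nat.cast_ne_zero.2 (card_ne_zero_of_mem hi)
  have hv : #T * Φ v i = c := by
    rw [← hsum, heff v h0]
    simp [v, unanimityGame]
  rw [eq_mul_inv_iff_mul_eq₀ hcard, mul_comm, hv]

end GameValue

/-- Shapley's uniqueness theorem: any value on the space of TU games satisfying
efficiency, the null player property, symmetry, and additivity coincides with the
Shapley value. -/
theorem shapley_unique {ι : Type*} [Fintype ι] [DecidableEq ι]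
    (Φ : (Finset ι → ℝ) → ι → ℝ)
    (heff : ∀ δ : Finset ι → ℝ, δ ∅ = 0 → ∑ i, Φ δ i = δ Finset.univ)
    (hnull : ∀ δ : Finset ι → ℝ, δ ∅ = 0 → ∀ i : ι,
      (∀ S : Finset ι, i ∉ S → δ (insert i S) = δ S) → Φ δ i = 0)
    (hsym : ∀ δ : Finset ι → ℝ, δ ∅ = 0 → ∀ i j : ι,
      (∀ S : Finset ι, i ∉ S → j ∉ S → δ (insert i S) = δ (insert j S)) →
      Φ δ i = Φ δ j)
    (hadd : ∀ δ γ : Finset ι → ℝ, δ ∅ = 0 → γ ∅ = 0 → ∀ i : ι,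
      Φ (fun S => δ S + γ S) i = Φ δ i + Φ γ i) :
    ∀ δ : Finset ι → ℝ, δ ∅ = 0 → ∀ i : ι, Φ δ i = shapley δ i := by
  intro δ hδ i
  have hadditive : GameValue.Additive Φ := hadd
  calc Φ δ i = Φ (∑ T, harsanyiDividend δ T • unanimityGame T) i := by
        rw [sum_harsanyiDividend_smul_unanimityGame]
    _ = ∑ T, Φ (harsanyiDividend δ T • unanimityGame T) i :=
        hadditive.map_sum _ _ (fun T _ => harsanyiDividend_smul_unanimityGame_empty hδ T) i
    _ = ∑ T, shapley (harsanyiDividend δ T • unanimityGame T) i := by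
        refine sum_congr rfl fun T _ => ?_
        rw [GameValue.apply_smul_unanimityGame heff hnull hsym
            (harsanyiDividend_smul_unanimityGame_empty hδ T),
          shapley_smul, shapley_unanimityGame]
    _ = shapley δ i := by rw [← shapley_sum, sum_harsanyiDividend_smul_unanimityGame]
end

section
/- Neutral alternative property in the committee setting: if for every group S ⊆ C \ {o} the number of voters approving S ∪ {o} equals the number of voters approving S, then Φ_o(δ) = 0 for the associated TU game δ, and for any other alternative o', Φ_{o'}(δ) > 0 implies o' is ranked above o and Φ_{o'}(δ) < 0 implies o' is ranked below o in the Shapley-based collective ranking. -/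
open Finset

/-- Neutral alternative: if for every group `S` not containing `o` the number of
voters approving `S ∪ {o}` equals the number approving `S`, then `o` has Shapley
score `0`; alternatives with positive Shapley score are ranked above `o` and those
with negative score below `o`. -/
theorem neutral_alternative {C : Type*} [Fintype C] [DecidableEq C]
    (n : ℕ) (E : Fin n → Finset (Finset C)) (hE : ∀ v, ∅ ∉ E v)
    (δ : Finset C → ℝ)
    (hδ : ∀ S, δ S = ∑ v : Fin n, if S ∈ E v then (1 : ℝ) else 0)
    (o : C) (hneutral : ∀ S : Finset C, o ∉ S → δ (insert o S) = δ S) :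
    shapley δ o = 0 ∧
    ∀ o' : C, (shapley δ o' > 0 → shapley δ o' > shapley δ o) ∧
      (shapley δ o' < 0 → shapley δ o' < shapley δ o) := by
  have h0 : shapley δ o = 0 := by
    unfold shapley
    apply Finset.sum_eq_zero
    intro S hS
    have hoS : o ∉ S := fun h =>
      (Finset.mem_erase.mp (Finset.mem_powerset.mp hS h)).1 rfl
    rw [hneutral S hoS]
    ring
  refine ⟨h0, fun o' => ⟨fun h => by linarith, fun h => by linarith⟩⟩
end
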